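/- arXiv:2505.23767 — 7 statements merged into one kernel-verified Lean document; each statement's English description precedes it below -/
import Mathlib

section
/- Let f be absolutely monotonic on an interval (a,b) and let g be completely monotonic on (0,∞) with a < g(x) < b for all x > 0. Then the composition f ∘ g is completely monotonic on (0,∞). -/
open Set Real Topology

lemma itdw_open {s : Set ℝ} (hs : IsOpen s) {x : ℝ} (hx : x ∈ s) (n : ℕ) (f : ℝ → ℝ) :
    iteratedDerivWithin n f s x = iteratedDeriv n f x := by
  rw [iteratedDerivWithin_eq_iteratedFDerivWithin, iteratedFDerivWithin_of_isOpen n hs hx,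
    iteratedDeriv_eq_iteratedFDeriv]

/-- local notion: completely monotone on `(0,∞)` with plain iterated derivatives. -/
def CMp (u : ℝ → ℝ) : Prop :=
  ContDiffOn ℝ (⊤ : ℕ∞) u (Set.Ioi 0) ∧
    ∀ n : ℕ, ∀ x ∈ Set.Ioi (0:ℝ), 0 ≤ (-1 : ℝ) ^ n * iteratedDeriv n u x

lemma diffAt_of_contDiffOn {s : Set ℝ} (hs : IsOpen s) {u : ℝ → ℝ}
    (hu : ContDiffOn ℝ (⊤ : ℕ∞) u s) {x : ℝ} (hx : x ∈ s) : DifferentiableAt ℝ u x :=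
  (hu.contDiffAt (hs.mem_nhds hx)).differentiableAt (by simp)

lemma CMp.negderiv {u : ℝ → ℝ} (hu : CMp u) : CMp (fun y => -(deriv u y)) := by
  refine ⟨((hu.1.deriv_of_isOpen isOpen_Ioi (by simp)).neg), fun n x hx => ?_⟩
  have h1 : iteratedDeriv n (fun y => -(deriv u y)) x = -(iteratedDeriv (n+1) u x) := by
    rw [iteratedDeriv_fun_neg, ← iteratedDeriv_succ']
  have h2 : (-1:ℝ)^n * -(iteratedDeriv (n+1) u x) = (-1:ℝ)^(n+1) * iteratedDeriv (n+1) u x := by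
    ring
  rw [h1, h2]
  exact hu.2 (n+1) x hx

lemma CMp_mul_sign : ∀ n : ℕ, ∀ u v : ℝ → ℝ, CMp u → CMp v →
    ∀ x ∈ Set.Ioi (0:ℝ), 0 ≤ (-1:ℝ)^n * iteratedDeriv n (fun y => u y * v y) x := by
  intro n
  induction n with
  | zero =>
    intro u v hu hv x hx
    simpa using mul_nonneg (by simpa using hu.2 0 x hx) (by simpa using hv.2 0 x hx)
  | succ n IH =>
    intro u v hu hv x hx
    have hud : ContDiffOn ℝ (⊤ : ℕ∞) (deriv u) (Set.Ioi (0:ℝ)) := hu.1.deriv_of_isOpen isOpen_Ioi (by simp)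
    have hvd : ContDiffOn ℝ (⊤ : ℕ∞) (deriv v) (Set.Ioi (0:ℝ)) := hv.1.deriv_of_isOpen isOpen_Ioi (by simp)
    have e1 : iteratedDeriv (n+1) (fun y => u y * v y) x
        = iteratedDeriv n (fun y => -(-(deriv u y) * v y) + -(u y * -(deriv v y))) x := by
      rw [iteratedDeriv_succ']
      refine Filter.EventuallyEq.iteratedDeriv_eq n ?_
      filter_upwards [isOpen_Ioi.mem_nhds hx] with y hy
      rw [deriv_fun_mul (diffAt_of_contDiffOn isOpen_Ioi hu.1 hy)
        (diffAt_of_contDiffOn isOpen_Ioi hv.1 hy)]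
      ring
    have cA : ContDiffOn ℝ n (fun y => -(-(deriv u y) * v y)) (Set.Ioi (0:ℝ)) :=
      ((hud.neg.mul hv.1).neg).of_le (by exact_mod_cast le_top)
    have cB : ContDiffOn ℝ n (fun y => -(u y * -(deriv v y))) (Set.Ioi (0:ℝ)) :=
      ((hu.1.mul hvd.neg).neg).of_le (by exact_mod_cast le_top)
    have e2 : iteratedDeriv n (fun y => -(-(deriv u y) * v y) + -(u y * -(deriv v y))) x
        = iteratedDeriv n (fun y => -(-(deriv u y) * v y)) x
          + iteratedDeriv n (fun y => -(u y * -(deriv v y))) x := by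
      rw [← itdw_open isOpen_Ioi hx, ← itdw_open isOpen_Ioi hx, ← itdw_open isOpen_Ioi hx]
      exact iteratedDerivWithin_add hx (uniqueDiffOn_Ioi 0) (cA x hx) (cB x hx)
    have hA : 0 ≤ (-1:ℝ)^n * iteratedDeriv n (fun y => -(deriv u y) * v y) x :=
      IH _ v hu.negderiv hv x hx
    have hB : 0 ≤ (-1:ℝ)^n * iteratedDeriv n (fun y => u y * -(deriv v y)) x :=
      IH u _ hu hv.negderiv x hx
    rw [e1, e2, iteratedDeriv_fun_neg, iteratedDeriv_fun_neg]
    have : (-1:ℝ)^(n+1) * (-(iteratedDeriv n (fun y => -(deriv u y) * v y) x)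
        + -(iteratedDeriv n (fun y => u y * -(deriv v y)) x))
        = (-1:ℝ)^n * iteratedDeriv n (fun y => -(deriv u y) * v y) x
          + (-1:ℝ)^n * iteratedDeriv n (fun y => u y * -(deriv v y)) x := by ring
    rw [this]
    exact add_nonneg hA hB

lemma CMp.mul {u v : ℝ → ℝ} (hu : CMp u) (hv : CMp v) : CMp (fun y => u y * v y) :=
  ⟨hu.1.mul hv.1, fun n x hx => CMp_mul_sign n u v hu hv x hx⟩

lemma CMp_one : CMp (fun _ => (1:ℝ)) := by
  refine ⟨contDiffOn_const, fun n x hx => ?_⟩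
  cases n with
  | zero => simp
  | succ n =>
    have : iteratedDeriv (n+1) (fun _ => (1:ℝ)) x = 0 := by
      rw [iteratedDeriv_eq_iteratedFDeriv, iteratedFDeriv_const_of_ne (Nat.succ_ne_zero n)]
      simp
    simp [this]

lemma comp_sign (a b : ℝ) (g : ℝ → ℝ) (hg : CMp g)
    (hmem : ∀ x ∈ Set.Ioi (0:ℝ), g x ∈ Set.Ioo a b) :
    ∀ n : ℕ, ∀ f u : ℝ → ℝ, ContDiffOn ℝ (⊤ : ℕ∞) f (Set.Ioo a b) →
      (∀ k : ℕ, ∀ y ∈ Set.Ioo a b, 0 ≤ iteratedDeriv k f y) → CMp u →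
      ∀ x ∈ Set.Ioi (0:ℝ), 0 ≤ (-1:ℝ)^n * iteratedDeriv n (fun y => f (g y) * u y) x := by
  intro n
  induction n with
  | zero =>
    intro f u hfC hfS hu x hx
    simpa using mul_nonneg (by simpa using hfS 0 (g x) (hmem x hx)) (by simpa using hu.2 0 x hx)
  | succ n IH =>
    intro f u hfC hfS hu x hx
    have hfd : ContDiffOn ℝ (⊤ : ℕ∞) (deriv f) (Set.Ioo a b) := hfC.deriv_of_isOpen isOpen_Ioo (by simp)
    have hgd : ContDiffOn ℝ (⊤ : ℕ∞) (deriv g) (Set.Ioi (0:ℝ)) := hg.1.deriv_of_isOpen isOpen_Ioi (by simp)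
    have hud : ContDiffOn ℝ (⊤ : ℕ∞) (deriv u) (Set.Ioi (0:ℝ)) := hu.1.deriv_of_isOpen isOpen_Ioi (by simp)
    have hmaps : Set.MapsTo g (Set.Ioi (0:ℝ)) (Set.Ioo a b) := fun y hy => hmem y hy
    have dfg : ContDiffOn ℝ (⊤ : ℕ∞) (fun y => deriv f (g y)) (Set.Ioi (0:ℝ)) :=
      hfd.comp hg.1 hmaps
    have ffg : ContDiffOn ℝ (⊤ : ℕ∞) (fun y => f (g y)) (Set.Ioi (0:ℝ)) :=
      hfC.comp hg.1 hmaps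
    have e1 : iteratedDeriv (n+1) (fun y => f (g y) * u y) x
        = iteratedDeriv n (fun y => -(deriv f (g y) * (-(deriv g y) * u y))
            + -(f (g y) * -(deriv u y))) x := by
      rw [iteratedDeriv_succ']
      refine Filter.EventuallyEq.iteratedDeriv_eq n ?_
      filter_upwards [isOpen_Ioi.mem_nhds hx] with y hy
      have hfdy : DifferentiableAt ℝ f (g y) :=
        diffAt_of_contDiffOn isOpen_Ioo hfC (hmem y hy)
      have hgdy : DifferentiableAt ℝ g y := diffAt_of_contDiffOn isOpen_Ioi hg.1 hy
      have hfgy : DifferentiableAt ℝ (fun z => f (g z)) y := hfdy.comp y hgdy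
      have hudy : DifferentiableAt ℝ u y := diffAt_of_contDiffOn isOpen_Ioi hu.1 hy
      rw [deriv_fun_mul hfgy hudy]
      have hcomp : deriv (fun z => f (g z)) y = deriv f (g y) * deriv g y :=
        deriv_comp y hfdy hgdy
      rw [hcomp]; ring
    have cA : ContDiffOn ℝ n (fun y => -(deriv f (g y) * (-(deriv g y) * u y)))
        (Set.Ioi (0:ℝ)) := ((dfg.mul (hgd.neg.mul hu.1)).neg).of_le (by exact_mod_cast le_top)
    have cB : ContDiffOn ℝ n (fun y => -(f (g y) * -(deriv u y))) (Set.Ioi (0:ℝ)) :=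
      ((ffg.mul hud.neg).neg).of_le (by exact_mod_cast le_top)
    have e2 : iteratedDeriv n (fun y => -(deriv f (g y) * (-(deriv g y) * u y))
            + -(f (g y) * -(deriv u y))) x
        = iteratedDeriv n (fun y => -(deriv f (g y) * (-(deriv g y) * u y))) x
          + iteratedDeriv n (fun y => -(f (g y) * -(deriv u y))) x := by
      rw [← itdw_open isOpen_Ioi hx, ← itdw_open isOpen_Ioi hx, ← itdw_open isOpen_Ioi hx]
      exact iteratedDerivWithin_add hx (uniqueDiffOn_Ioi 0) (cA x hx) (cB x hx)
    have hfS' : ∀ k : ℕ, ∀ y ∈ Set.Ioo a b, 0 ≤ iteratedDeriv k (deriv f) y := by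
      intro k y hy
      rw [← iteratedDeriv_succ']
      exact hfS (k+1) y hy
    have hw : CMp (fun y => -(deriv g y) * u y) := hg.negderiv.mul hu
    have hA : 0 ≤ (-1:ℝ)^n * iteratedDeriv n (fun y => deriv f (g y) * (-(deriv g y) * u y)) x :=
      IH (deriv f) _ hfd hfS' hw x hx
    have hB : 0 ≤ (-1:ℝ)^n * iteratedDeriv n (fun y => f (g y) * -(deriv u y)) x :=
      IH f _ hfC hfS hu.negderiv x hx
    rw [e1, e2, iteratedDeriv_fun_neg, iteratedDeriv_fun_neg]
    have : (-1:ℝ)^(n+1) *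
        (-(iteratedDeriv n (fun y => deriv f (g y) * (-(deriv g y) * u y)) x)
          + -(iteratedDeriv n (fun y => f (g y) * -(deriv u y)) x))
        = (-1:ℝ)^n * iteratedDeriv n (fun y => deriv f (g y) * (-(deriv g y) * u y)) x
          + (-1:ℝ)^n * iteratedDeriv n (fun y => f (g y) * -(deriv u y)) x := by ring
    rw [this]
    exact add_nonneg hA hB


/-- `f` is completely monotonic on `s`: smooth on `s` and `(-1)^n f^(n) ≥ 0` on `s`. -/
def CompletelyMonotonicOn (f : ℝ → ℝ) (s : Set ℝ) : Prop :=
  ContDiffOn ℝ (⊤ : ℕ∞) f s ∧ ∀ (n : ℕ), ∀ x ∈ s, 0 ≤ (-1 : ℝ) ^ n * iteratedDerivWithin n f s x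

/-- `f` is absolutely monotonic on `s`: smooth on `s` and all derivatives nonnegative. -/
def AbsolutelyMonotonicOn (f : ℝ → ℝ) (s : Set ℝ) : Prop :=
  ContDiffOn ℝ (⊤ : ℕ∞) f s ∧ ∀ (n : ℕ), ∀ x ∈ s, 0 ≤ iteratedDerivWithin n f s x

/-- `f` is a Bernstein function on `(0,∞)`. -/
def BernsteinOn (f : ℝ → ℝ) (s : Set ℝ) : Prop :=
  ContDiffOn ℝ (⊤ : ℕ∞) f s ∧ (∀ x ∈ s, 0 ≤ f x) ∧
    ∀ (n : ℕ), 1 ≤ n → ∀ x ∈ s, 0 ≤ (-1 : ℝ) ^ (n - 1) * iteratedDerivWithin n f s x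

theorem stmt_4 (a b : ℝ) (f g : ℝ → ℝ)
    (hf : AbsolutelyMonotonicOn f (Set.Ioo a b))
    (hg : CompletelyMonotonicOn g (Set.Ioi 0))
    (hmem : ∀ x ∈ Set.Ioi (0:ℝ), g x ∈ Set.Ioo a b) :
    CompletelyMonotonicOn (f ∘ g) (Set.Ioi 0) := by
  obtain ⟨hfC, hfS⟩ := hf
  obtain ⟨hgC, hgS⟩ := hg
  have hgCM : CMp g := ⟨hgC, fun n x hx => by
    rw [← itdw_open isOpen_Ioi hx]; exact hgS n x hx⟩
  have hfS' : ∀ k : ℕ, ∀ y ∈ Set.Ioo a b, 0 ≤ iteratedDeriv k f y := fun k y hy => by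
    rw [← itdw_open isOpen_Ioo hy]; exact hfS k y hy
  have hmaps : Set.MapsTo g (Set.Ioi (0:ℝ)) (Set.Ioo a b) := fun y hy => hmem y hy
  refine ⟨hfC.comp hgC hmaps, fun n x hx => ?_⟩
  rw [itdw_open isOpen_Ioi hx]
  have e : iteratedDeriv n (f ∘ g) x = iteratedDeriv n (fun y => f (g y) * 1) x := by
    congr 1; funext y; simp [Function.comp]
  rw [e]
  exact comp_sign a b g hgCM hmem n f (fun _ => 1) hfC hfS' CMp_one x hx
end

section
/- Let f : (0,∞) → (0,∞) be smooth. If the function x ↦ -(log f(x))' = -f'(x)/f(x) is completely monotonic on (0,∞), then f itself is completely monotonic on (0,∞). -/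
open Set Real

/-- Pascal-type rearrangement of antidiagonal sums, used for the Leibniz rule. -/
lemma pascal_sum (A B : ℕ → ℝ) (n : ℕ) :
    ∑ p ∈ Finset.HasAntidiagonal.antidiagonal n,
        (n.choose p.1 : ℝ) * (A (p.1 + 1) * B p.2 + A p.1 * B (p.2 + 1))
      = ∑ p ∈ Finset.HasAntidiagonal.antidiagonal (n + 1),
        ((n + 1).choose p.1 : ℝ) * (A p.1 * B p.2) := by
  have e1 := Finset.Nat.sum_antidiagonal_succ (n := n)
    (f := fun p => (n.choose p.1 : ℝ) * (A p.1 * B p.2))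
  have e2 := Finset.Nat.sum_antidiagonal_succ' (n := n)
    (f := fun p => (n.choose p.1 : ℝ) * (A p.1 * B p.2))
  simp only [Nat.choose_succ_self, Nat.cast_zero, zero_mul, zero_add,
    Nat.choose_zero_right, Nat.cast_one, one_mul] at e1 e2
  have h2 : ∑ p ∈ Finset.HasAntidiagonal.antidiagonal n, (n.choose p.1 : ℝ) * (A p.1 * B (p.2 + 1))
      = A 0 * B (n + 1)
        + ∑ p ∈ Finset.HasAntidiagonal.antidiagonal n, (n.choose (p.1 + 1) : ℝ) * (A (p.1 + 1) * B p.2) := by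
    rw [← e2, e1]
  rw [Finset.Nat.sum_antidiagonal_succ
    (f := fun p => ((n + 1).choose p.1 : ℝ) * (A p.1 * B p.2))]
  simp only [mul_add, Finset.sum_add_distrib, h2, Nat.choose_zero_right, Nat.cast_one, one_mul]
  rw [← add_assoc, add_comm (∑ p ∈ Finset.HasAntidiagonal.antidiagonal n,
      (n.choose p.1 : ℝ) * (A (p.1 + 1) * B p.2)) (A 0 * B (n + 1)), add_assoc,
    ← Finset.sum_add_distrib]
  congr 1
  refine Finset.sum_congr rfl fun p _ => ?_
  rw [Nat.choose_succ_succ]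
  push_cast
  ring

/-- Leibniz rule for iterated derivatives within a set. -/
lemma leibniz_iteratedDerivWithin {f g : ℝ → ℝ} {s : Set ℝ} (hs : UniqueDiffOn ℝ s)
    (hf : ContDiffOn ℝ (⊤ : ℕ∞) f s) (hg : ContDiffOn ℝ (⊤ : ℕ∞) g s) (n : ℕ) :
    ∀ x ∈ s, iteratedDerivWithin n (fun y => f y * g y) s x =
      ∑ p ∈ Finset.HasAntidiagonal.antidiagonal n,
        (n.choose p.1 : ℝ) * (iteratedDerivWithin p.1 f s x * iteratedDerivWithin p.2 g s x) := by
  induction n with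
  | zero => intro x hx; simp
  | succ n IH =>
    intro x hx
    have key : ∀ (m : ℕ) (F : ℝ → ℝ), ContDiffOn ℝ (⊤ : ℕ∞) F s →
        HasDerivWithinAt (iteratedDerivWithin m F s)
          (iteratedDerivWithin (m + 1) F s x) s x := by
      intro m F hF
      have hd : DifferentiableWithinAt ℝ (iteratedDerivWithin m F s) s x :=
        (hF.differentiableOn_iteratedDerivWithin
          (by exact_mod_cast lt_top_iff_ne_top.2 (by simp)) hs) x hx
      rw [iteratedDerivWithin_succ]
      exact hd.hasDerivWithinAt
    have hsum : HasDerivWithinAt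
        (fun y => ∑ p ∈ Finset.HasAntidiagonal.antidiagonal n,
          (n.choose p.1 : ℝ) * (iteratedDerivWithin p.1 f s y * iteratedDerivWithin p.2 g s y))
        (∑ p ∈ Finset.HasAntidiagonal.antidiagonal n,
          (n.choose p.1 : ℝ) *
            (iteratedDerivWithin (p.1 + 1) f s x * iteratedDerivWithin p.2 g s x +
             iteratedDerivWithin p.1 f s x * iteratedDerivWithin (p.2 + 1) g s x)) s x := by
      refine HasDerivWithinAt.fun_sum fun p _ => ?_
      exact ((key p.1 f hf).mul (key p.2 g hg)).const_mul _
    rw [iteratedDerivWithin_succ,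
      derivWithin_congr (fun y hy => IH y hy) (IH x hx),
      hsum.derivWithin (hs x hx),
      pascal_sum (fun i => iteratedDerivWithin i f s x) (fun j => iteratedDerivWithin j g s x) n]

theorem stmt_6 (f : ℝ → ℝ)
    (hf : ContDiffOn ℝ (⊤ : ℕ∞) f (Set.Ioi 0))
    (hfpos : ∀ x ∈ Set.Ioi (0:ℝ), 0 < f x)
    (h : CompletelyMonotonicOn
      (fun x => -(derivWithin f (Set.Ioi 0) x / f x)) (Set.Ioi 0)) :
    CompletelyMonotonicOn f (Set.Ioi 0) := by
  set s : Set ℝ := Set.Ioi 0 with hsdef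
  have hs : UniqueDiffOn ℝ s := uniqueDiffOn_Ioi 0
  set G : ℝ → ℝ := fun x => -(derivWithin f s x / f x) with hGdef
  obtain ⟨hG, hGsign⟩ := h
  have hEqOn : Set.EqOn (derivWithin f s) (fun y => -(G y * f y)) s := by
    intro y hy
    have hf0 : f y ≠ 0 := (hfpos y hy).ne'
    show derivWithin f s y = -(-(derivWithin f s y / f y) * f y)
    rw [neg_mul, neg_neg, div_mul_cancel₀ _ hf0]
  refine ⟨hf, ?_⟩
  intro n
  induction n using Nat.strong_induction_on with
  | _ n IH =>
    match n with
    | 0 =>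
      intro x hx
      simpa using (hfpos x hx).le
    | (m + 1) =>
      intro x hx
      have e : iteratedDerivWithin (m + 1) f s x
          = -∑ p ∈ Finset.HasAntidiagonal.antidiagonal m,
              (m.choose p.1 : ℝ) *
                (iteratedDerivWithin p.1 G s x * iteratedDerivWithin p.2 f s x) := by
        rw [iteratedDerivWithin_succ',
          iteratedDerivWithin_congr hEqOn hx,
          iteratedDerivWithin_fun_neg,
          leibniz_iteratedDerivWithin hs hG hf m x hx]
      have e2 : (-1 : ℝ) ^ (m + 1) * iteratedDerivWithin (m + 1) f s x
          = ∑ p ∈ Finset.HasAntidiagonal.antidiagonal m,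
              (m.choose p.1 : ℝ) *
                (((-1 : ℝ) ^ p.1 * iteratedDerivWithin p.1 G s x) *
                 ((-1 : ℝ) ^ p.2 * iteratedDerivWithin p.2 f s x)) := by
        rw [e, mul_neg, pow_succ, mul_neg_one, neg_mul, neg_neg, Finset.mul_sum]
        refine Finset.sum_congr rfl fun p hp => ?_
        have hps : p.1 + p.2 = m := Finset.HasAntidiagonal.mem_antidiagonal.1 hp
        rw [← hps, pow_add]
        ring
      rw [e2]
      refine Finset.sum_nonneg fun p hp => ?_
      have hps : p.1 + p.2 = m := Finset.HasAntidiagonal.mem_antidiagonal.1 hp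
      have h1 : 0 ≤ (-1 : ℝ) ^ p.1 * iteratedDerivWithin p.1 G s x := hGsign p.1 x hx
      have h2 : 0 ≤ (-1 : ℝ) ^ p.2 * iteratedDerivWithin p.2 f s x :=
        IH p.2 (by omega) x hx
      positivity
end

section
/- Let f be completely monotonic on (0,∞), and let g : (0,∞) → (0,∞) be a nonnegative smooth function whose derivative g' is completely monotonic on (0,∞). Then f ∘ g is completely monotonic on (0,∞). -/
open Set Real

private lemma hSU : UniqueDiffOn ℝ (Set.Ioi (0:ℝ)) := isOpen_Ioi.uniqueDiffOn

/-- If `f` is completely monotonic then so is `-f'`. -/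
private lemma cm_shift {f : ℝ → ℝ} (hf : CompletelyMonotonicOn f (Set.Ioi 0)) :
    CompletelyMonotonicOn (fun y => -derivWithin f (Set.Ioi 0) y) (Set.Ioi 0) := by
  constructor
  · exact (hf.1.derivWithin hSU (by simp)).neg
  · intro n x hx
    have h1 : iteratedDerivWithin n (fun y => -derivWithin f (Set.Ioi 0) y) (Set.Ioi 0) x
        = -iteratedDerivWithin n (derivWithin f (Set.Ioi 0)) (Set.Ioi 0) x :=
      iteratedDerivWithin_fun_neg _
    have h2 : iteratedDerivWithin n (derivWithin f (Set.Ioi 0)) (Set.Ioi 0) x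
        = iteratedDerivWithin (n+1) f (Set.Ioi 0) x := (congrFun iteratedDerivWithin_succ' x).symm
    rw [h1, h2]
    have e : (-1:ℝ)^n * -(iteratedDerivWithin (n+1) f (Set.Ioi 0) x)
        = (-1)^(n+1) * iteratedDerivWithin (n+1) f (Set.Ioi 0) x := by ring
    rw [e]
    exact hf.2 (n+1) x hx

/-- Sign of iterated derivatives of a product of functions completely monotonic up to order n. -/
private lemma mul_sign : ∀ n : ℕ, ∀ f h : ℝ → ℝ, ContDiffOn ℝ (⊤ : ℕ∞) f (Set.Ioi 0) →
    ContDiffOn ℝ (⊤ : ℕ∞) h (Set.Ioi 0) →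
    (∀ k ≤ n, ∀ x ∈ Set.Ioi (0:ℝ), 0 ≤ (-1:ℝ)^k * iteratedDerivWithin k f (Set.Ioi 0) x) →
    (∀ k ≤ n, ∀ x ∈ Set.Ioi (0:ℝ), 0 ≤ (-1:ℝ)^k * iteratedDerivWithin k h (Set.Ioi 0) x) →
    ∀ x ∈ Set.Ioi (0:ℝ),
      0 ≤ (-1:ℝ)^n * iteratedDerivWithin n (fun y => f y * h y) (Set.Ioi 0) x := by
  intro n
  induction n with
  | zero =>
    intro f h _ _ sf sh x hx
    have h1 := sf 0 le_rfl x hx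
    have h2 := sh 0 le_rfl x hx
    simp only [pow_zero, one_mul, iteratedDerivWithin_zero] at *
    exact mul_nonneg h1 h2
  | succ n IH =>
    intro f h cf ch sf sh x hx
    set S := Set.Ioi (0:ℝ) with hS
    set F := fun y => -derivWithin f S y with hF
    set H := fun y => -derivWithin h S y with hH
    have cF : ContDiffOn ℝ (⊤ : ℕ∞) F S := (cf.derivWithin hSU (by simp)).neg
    have cH : ContDiffOn ℝ (⊤ : ℕ∞) H S := (ch.derivWithin hSU (by simp)).neg
    have sF : ∀ k ≤ n, ∀ x ∈ S, 0 ≤ (-1:ℝ)^k * iteratedDerivWithin k F S x := by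
      intro k hk y hy
      have e1 : iteratedDerivWithin k F S y
          = -iteratedDerivWithin k (derivWithin f S) S y := iteratedDerivWithin_fun_neg _
      have e2 : iteratedDerivWithin k (derivWithin f S) S y
          = iteratedDerivWithin (k+1) f S y := (congrFun iteratedDerivWithin_succ' y).symm
      rw [e1, e2]
      have e3 : (-1:ℝ)^k * -(iteratedDerivWithin (k+1) f S y)
          = (-1)^(k+1) * iteratedDerivWithin (k+1) f S y := by ring
      rw [e3]
      exact sf (k+1) (Nat.succ_le_succ hk) y hy
    have sH : ∀ k ≤ n, ∀ x ∈ S, 0 ≤ (-1:ℝ)^k * iteratedDerivWithin k H S x := by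
      intro k hk y hy
      have e1 : iteratedDerivWithin k H S y
          = -iteratedDerivWithin k (derivWithin h S) S y := iteratedDerivWithin_fun_neg _
      have e2 : iteratedDerivWithin k (derivWithin h S) S y
          = iteratedDerivWithin (k+1) h S y := (congrFun iteratedDerivWithin_succ' y).symm
      rw [e1, e2]
      have e3 : (-1:ℝ)^k * -(iteratedDerivWithin (k+1) h S y)
          = (-1)^(k+1) * iteratedDerivWithin (k+1) h S y := by ring
      rw [e3]
      exact sh (k+1) (Nat.succ_le_succ hk) y hy
    have E : Set.EqOn (derivWithin (fun y => f y * h y) S)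
        ((fun y => -(F y * h y)) + fun y => -(f y * H y)) S := by
      intro y hy
      have hd : derivWithin (fun y => f y * h y) S y
          = derivWithin f S y * h y + f y * derivWithin h S y :=
        derivWithin_fun_mul
          (cf.differentiableOn (by simp) y hy) (ch.differentiableOn (by simp) y hy)
      simp only [Pi.add_apply, hF, hH, hd]
      ring
    have h1 : iteratedDerivWithin (n+1) (fun y => f y * h y) S x
        = iteratedDerivWithin n (derivWithin (fun y => f y * h y) S) S x :=
      congrFun iteratedDerivWithin_succ' x
    have h2 := iteratedDerivWithin_congr (n := n) E hx
    have cA : ContDiffOn ℝ (n : ℕ∞) (fun y => -(F y * h y)) S := ((cF.mul ch).neg).of_le (by exact_mod_cast le_top)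
    have cB : ContDiffOn ℝ (n : ℕ∞) (fun y => -(f y * H y)) S := ((cf.mul cH).neg).of_le (by exact_mod_cast le_top)
    have h3 : iteratedDerivWithin n ((fun y => -(F y * h y)) + fun y => -(f y * H y)) S x
        = iteratedDerivWithin n (fun y => -(F y * h y)) S x
          + iteratedDerivWithin n (fun y => -(f y * H y)) S x :=
      iteratedDerivWithin_add hx hSU (cA x hx) (cB x hx)
    have h4 : iteratedDerivWithin n (fun y => -(F y * h y)) S x
        = -iteratedDerivWithin n (fun y => F y * h y) S x := iteratedDerivWithin_fun_neg _
    have h5 : iteratedDerivWithin n (fun y => -(f y * H y)) S x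
        = -iteratedDerivWithin n (fun y => f y * H y) S x := iteratedDerivWithin_fun_neg _
    have ka := IH F h cF ch sF (fun k hk => sh k (le_trans hk (Nat.le_succ n))) x hx
    have kb := IH f H (cf.of_le (by simp)) cH
      (fun k hk => sf k (le_trans hk (Nat.le_succ n))) sH x hx
    rw [h1, h2, h3, h4, h5]
    have e : (-1:ℝ)^(n+1) * (-iteratedDerivWithin n (fun y => F y * h y) S x
        + -iteratedDerivWithin n (fun y => f y * H y) S x)
        = (-1)^n * iteratedDerivWithin n (fun y => F y * h y) S x
          + (-1)^n * iteratedDerivWithin n (fun y => f y * H y) S x := by ring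
    rw [e]
    exact add_nonneg ka kb

private lemma comp_sign_s7 (g : ℝ → ℝ) (hg : ContDiffOn ℝ (⊤ : ℕ∞) g (Set.Ioi 0))
    (hgpos : ∀ x ∈ Set.Ioi (0:ℝ), 0 < g x)
    (hg' : CompletelyMonotonicOn (derivWithin g (Set.Ioi 0)) (Set.Ioi 0)) :
    ∀ n : ℕ, ∀ f : ℝ → ℝ, CompletelyMonotonicOn f (Set.Ioi 0) → ∀ x ∈ Set.Ioi (0:ℝ),
      0 ≤ (-1:ℝ)^n * iteratedDerivWithin n (f ∘ g) (Set.Ioi 0) x := by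
  intro n
  induction n using Nat.strong_induction_on with
  | _ n IH =>
    match n with
    | 0 =>
      intro f hf x hx
      have := hf.2 0 (g x) (hgpos x hx)
      simpa using this
    | (n+1) =>
      intro f hf x hx
      set S := Set.Ioi (0:ℝ) with hS
      have mapsTo : Set.MapsTo g S S := fun y hy => hgpos y hy
      set F := fun y => -derivWithin f S y with hF
      have hFcm : CompletelyMonotonicOn F S := cm_shift hf
      have hfg : ContDiffOn ℝ (⊤ : ℕ∞) (f ∘ g) S := hf.1.comp hg mapsTo
      have E : Set.EqOn (derivWithin (f ∘ g) S)
          (fun y => -((F ∘ g) y * derivWithin g S y)) S := by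
        intro y hy
        have hd : derivWithin (f ∘ g) S y = derivWithin f S (g y) * derivWithin g S y :=
          derivWithin_comp y (hf.1.differentiableOn (by simp) (g y) (mapsTo hy))
            (hg.differentiableOn (by simp) y hy) mapsTo
        simp only [Function.comp, hF, hd]
        ring
      have h1 : iteratedDerivWithin (n+1) (f ∘ g) S x
          = iteratedDerivWithin n (derivWithin (f ∘ g) S) S x :=
        congrFun iteratedDerivWithin_succ' x
      have h2 := iteratedDerivWithin_congr (n := n) E hx
      have h3 : iteratedDerivWithin n (fun y => -((F ∘ g) y * derivWithin g S y)) S x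
          = -iteratedDerivWithin n (fun y => (F ∘ g) y * derivWithin g S y) S x :=
        iteratedDerivWithin_fun_neg _
      have key : 0 ≤ (-1:ℝ)^n
          * iteratedDerivWithin n (fun y => (F ∘ g) y * derivWithin g S y) S x :=
        mul_sign n (F ∘ g) (derivWithin g S) (hFcm.1.comp hg mapsTo) hg'.1
          (fun k hk => IH k (Nat.lt_succ_of_le hk) F hFcm)
          (fun k _ => hg'.2 k) x hx
      rw [h1, h2, h3]
      have e : (-1:ℝ)^(n+1)
          * -iteratedDerivWithin n (fun y => (F ∘ g) y * derivWithin g S y) S x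
          = (-1)^n * iteratedDerivWithin n (fun y => (F ∘ g) y * derivWithin g S y) S x := by
        ring
      rw [e]
      exact key

theorem stmt_7 (f g : ℝ → ℝ)
    (hf : CompletelyMonotonicOn f (Set.Ioi 0))
    (hg : ContDiffOn ℝ (⊤ : ℕ∞) g (Set.Ioi 0))
    (hgpos : ∀ x ∈ Set.Ioi (0:ℝ), 0 < g x)
    (hg' : CompletelyMonotonicOn (derivWithin g (Set.Ioi 0)) (Set.Ioi 0)) :
    CompletelyMonotonicOn (f ∘ g) (Set.Ioi 0) := by
  refine ⟨hf.1.comp hg (fun y hy => hgpos y hy), fun n x hx => ?_⟩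
  exact comp_sign_s7 g hg hgpos hg' n f hf x hx
end

section
/- The function x ↦ (1/x) log(1+x) is completely monotonic on (0,∞); equivalently, log((1+x)^{1/x}) is completely monotonic on (0,∞). -/
open Set Real

noncomputable def gAux (n : ℕ) (x : ℝ) : ℝ :=
  Real.log (1 + x) - ∑ k ∈ Finset.range n, x ^ (k+1) / ((k+1) * (1 + x) ^ (k+1))

lemma sum_identity (n : ℕ) {x : ℝ} (hne : (1:ℝ) + x ≠ 0) :
    1 / (1 + x) - ∑ k ∈ Finset.range n, x ^ k / (1 + x) ^ (k+2)
      = x ^ n / (1 + x) ^ (n+1) := by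
  induction n with
  | zero => simp
  | succ m ih =>
    rw [Finset.sum_range_succ, sub_add_eq_sub_sub, ih]
    field_simp
    ring

lemma gAux_hasDerivAt (n : ℕ) {x : ℝ} (hx : 0 < 1 + x) :
    HasDerivAt (gAux n) (x ^ n / (1 + x) ^ (n+1)) x := by
  have hne : (1 : ℝ) + x ≠ 0 := ne_of_gt hx
  have hlog : HasDerivAt (fun y : ℝ => Real.log (1 + y)) (1 / (1 + x)) x := by
    simpa using (HasDerivAt.log ((hasDerivAt_id x).const_add 1) hne)
  have hsum : HasDerivAt (fun y : ℝ => ∑ k ∈ Finset.range n,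
      y ^ (k+1) / ((k+1) * (1 + y) ^ (k+1)))
      (∑ k ∈ Finset.range n, x ^ k / (1 + x) ^ (k+2)) x := by
    apply HasDerivAt.fun_sum
    intro k _
    have hnum : HasDerivAt (fun y : ℝ => y ^ (k+1)) ((k+1) * x ^ k) x := by
      simpa using hasDerivAt_pow (k+1) x
    have hden : HasDerivAt (fun y : ℝ => ((k:ℝ)+1) * (1 + y) ^ (k+1))
        (((k:ℝ)+1) * ((k+1) * (1 + x) ^ k)) x := by
      have h := (HasDerivAt.fun_pow ((hasDerivAt_id x).const_add 1) (k+1)).const_mul ((k:ℝ)+1)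
      refine h.congr_deriv ?_
      simp only [id]
      push_cast
      ring
    have hdne : ((k:ℝ)+1) * (1 + x) ^ (k+1) ≠ 0 := by positivity
    have := hnum.fun_div hden hdne
    refine this.congr_deriv ?_
    have h1 : (1:ℝ) + x ≠ 0 := hne
    field_simp
    ring
  have h2 := hlog.sub hsum
  rw [sum_identity n hne] at h2
  exact h2

lemma gAux_nonneg (n : ℕ) {x : ℝ} (hx : 0 ≤ x) : 0 ≤ gAux n x := by
  have h0 : gAux n 0 = 0 := by simp [gAux]
  have hmono : MonotoneOn (gAux n) (Set.Ici 0) := by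
    apply monotoneOn_of_deriv_nonneg (convex_Ici 0)
    · intro y hy
      exact (gAux_hasDerivAt n (by simp at hy; linarith)).continuousAt.continuousWithinAt
    · intro y hy
      rw [interior_Ici] at hy
      exact ((gAux_hasDerivAt n (by simp at hy; linarith)).differentiableAt).differentiableWithinAt
    · intro y hy
      rw [interior_Ici] at hy
      simp only [Set.mem_Ioi] at hy
      rw [(gAux_hasDerivAt n (by linarith)).deriv]
      positivity
  calc 0 = gAux n 0 := h0.symm
    _ ≤ gAux n x := hmono (le_refl (0:ℝ)) hx hx

lemma key_deriv (n : ℕ) : ∀ x ∈ Set.Ioi (0:ℝ),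
    iteratedDeriv n (fun x => Real.log (1 + x) / x) x
      = (-1) ^ n * n.factorial * gAux n x / x ^ (n+1) := by
  induction n with
  | zero =>
    intro x hx
    simp [gAux, iteratedDeriv_zero]
  | succ m ih =>
    intro x hx
    simp only [Set.mem_Ioi] at hx
    have hxne : x ≠ 0 := ne_of_gt hx
    have h1x : (0:ℝ) < 1 + x := by linarith
    rw [iteratedDeriv_succ]
    have hev : iteratedDeriv m (fun x => Real.log (1 + x) / x)
        =ᶠ[nhds x] (fun y => (-1) ^ m * m.factorial * gAux m y / y ^ (m+1)) := by
      filter_upwards [isOpen_Ioi.mem_nhds (Set.mem_Ioi.mpr hx)] with y hy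
      exact ih y hy
    rw [hev.deriv_eq]
    have hg := gAux_hasDerivAt m (by linarith : (0:ℝ) < 1 + x)
    have hnum : HasDerivAt (fun y => (-1:ℝ) ^ m * m.factorial * gAux m y)
        ((-1:ℝ) ^ m * m.factorial * (x ^ m / (1 + x) ^ (m+1))) x :=
      hg.const_mul _
    have hden : HasDerivAt (fun y : ℝ => y ^ (m+1)) ((m+1) * x ^ m) x := by
      simpa using hasDerivAt_pow (m+1) x
    have hdne : x ^ (m+1) ≠ 0 := pow_ne_zero _ hxne
    have := (hnum.fun_div hden hdne).deriv
    rw [this]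
    have hsplit : gAux (m+1) x = gAux m x - x ^ (m+1) / ((m+1) * (1 + x) ^ (m+1)) := by
      simp [gAux, Finset.sum_range_succ]
      ring
    rw [hsplit]
    have h1ne : (1:ℝ) + x ≠ 0 := ne_of_gt h1x
    rw [Nat.factorial_succ]
    push_cast
    field_simp
    ring

lemma smooth_f : ContDiffOn ℝ (⊤ : ℕ∞) (fun x => Real.log (1 + x) / x) (Set.Ioi 0) := by
  apply ContDiffOn.div
  · apply ContDiffOn.log
    · exact (contDiffOn_const.add contDiffOn_id)
    · intro x hx
      simp only [Set.mem_Ioi] at hx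
      positivity
  · exact contDiffOn_id
  · intro x hx
    exact ne_of_gt hx

lemma within_eq (n : ℕ) {x : ℝ} (hx : x ∈ Set.Ioi (0:ℝ)) :
    iteratedDerivWithin n (fun x => Real.log (1 + x) / x) (Set.Ioi 0) x
      = iteratedDeriv n (fun x => Real.log (1 + x) / x) x := by
  rw [iteratedDerivWithin_eq_iteratedFDerivWithin, iteratedDeriv_eq_iteratedFDeriv,
    iteratedFDerivWithin_of_isOpen n isOpen_Ioi hx]

theorem stmt_13 :
    CompletelyMonotonicOn (fun x => Real.log (1 + x) / x) (Set.Ioi 0) := by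
  refine ⟨smooth_f, fun n x hx => ?_⟩
  rw [within_eq n hx, key_deriv n x hx]
  have hx' : (0:ℝ) < x := hx
  have hg := gAux_nonneg n hx'.le
  have : (-1:ℝ) ^ n * ((-1) ^ n * n.factorial * gAux n x / x ^ (n+1))
      = n.factorial * gAux n x / x ^ (n+1) := by
    rw [← mul_div_assoc, ← mul_assoc, ← mul_assoc, ← pow_add, ← two_mul, pow_mul]
    norm_num
  rw [this]
  positivity
end

section
/- The function x ↦ (1+x)^{1/x} is completely monotonic on (0,∞). -/
open Set Real

namespace Stmt15Aux

open Filter Topology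

noncomputable section

lemma hsU : UniqueDiffOn ℝ (Set.Ioi (0:ℝ)) := uniqueDiffOn_Ioi 0

/-- The negative of the derivative of a CM function is CM. -/
lemma cm_negderiv {u : ℝ → ℝ} (hu : CompletelyMonotonicOn u (Set.Ioi 0)) :
    CompletelyMonotonicOn (fun x => -(derivWithin u (Set.Ioi 0) x)) (Set.Ioi 0) := by
  constructor
  · exact (hu.1.derivWithin hsU (by simp)).neg
  · intro n x hx
    have h1 : iteratedDerivWithin n (fun x => -(derivWithin u (Set.Ioi 0) x)) (Set.Ioi 0) x
        = -(iteratedDerivWithin n (derivWithin u (Set.Ioi 0)) (Set.Ioi 0) x) :=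
      iteratedDerivWithin_neg (derivWithin u (Set.Ioi 0))
    have h2 := iteratedDerivWithin_succ' (f := u) (n := n) (s := Set.Ioi 0)
    have h3 := hu.2 (n+1) x hx
    rw [h1, ← h2]
    have e : (-1:ℝ)^n * -(iteratedDerivWithin (n+1) u (Set.Ioi 0) x)
        = (-1:ℝ)^(n+1) * iteratedDerivWithin (n+1) u (Set.Ioi 0) x := by
      rw [pow_succ]; ring
    rw [e]; exact h3

lemma cm_mul_aux : ∀ n : ℕ, ∀ u v : ℝ → ℝ, CompletelyMonotonicOn u (Set.Ioi 0) →
    CompletelyMonotonicOn v (Set.Ioi 0) → ∀ x ∈ Set.Ioi (0:ℝ),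
    0 ≤ (-1:ℝ)^n * iteratedDerivWithin n (fun y => u y * v y) (Set.Ioi 0) x := by
  intro n
  induction n with
  | zero =>
    intro u v hu hv x hx
    have h1 := hu.2 0 x hx
    have h2 := hv.2 0 x hx
    simp only [iteratedDerivWithin_zero, pow_zero, one_mul] at h1 h2 ⊢
    exact mul_nonneg h1 h2
  | succ n IH =>
    intro u v hu hv x hx
    have hu' := cm_negderiv hu
    have hv' := cm_negderiv hv
    set A : ℝ → ℝ := fun y => (-(derivWithin u (Set.Ioi 0) y)) * v y with hAdef
    set B : ℝ → ℝ := fun y => u y * (-(derivWithin v (Set.Ioi 0) y)) with hBdef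
    have heq : Set.EqOn (derivWithin (fun y => u y * v y) (Set.Ioi 0)) (-(A + B)) (Set.Ioi 0) := by
      intro y hy
      have hud : DifferentiableWithinAt ℝ u (Set.Ioi 0) y :=
        (hu.1.differentiableOn (by simp)) y hy
      have hvd : DifferentiableWithinAt ℝ v (Set.Ioi 0) y :=
        (hv.1.differentiableOn (by simp)) y hy
      have := (hud.hasDerivWithinAt.mul hvd.hasDerivWithinAt).derivWithin (hsU y hy)
      rw [show (fun y => u y * v y) = u * v from rfl, this]
      simp only [hAdef, hBdef, Pi.neg_apply, Pi.add_apply]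
      ring
    rw [iteratedDerivWithin_succ', iteratedDerivWithin_congr heq hx]
    have hA : ContDiffOn ℝ (n : ℕ∞) A (Set.Ioi 0) :=
      (((hu.1.derivWithin hsU (by simp)).neg).mul hv.1).of_le (by exact_mod_cast le_top)
    have hB : ContDiffOn ℝ (n : ℕ∞) B (Set.Ioi 0) :=
      (hu.1.mul ((hv.1.derivWithin hsU (by simp)).neg)).of_le (by exact_mod_cast le_top)
    rw [iteratedDerivWithin_neg (A + B), iteratedDerivWithin_add hx hsU (hA x hx) (hB x hx)]
    have h1 : 0 ≤ (-1:ℝ)^n * iteratedDerivWithin n A (Set.Ioi 0) x := IH _ _ hu' hv x hx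
    have h2 : 0 ≤ (-1:ℝ)^n * iteratedDerivWithin n B (Set.Ioi 0) x := IH _ _ hu hv' x hx
    have e : (-1:ℝ)^(n+1) * -(iteratedDerivWithin n A (Set.Ioi 0) x
          + iteratedDerivWithin n B (Set.Ioi 0) x)
        = (-1:ℝ)^n * iteratedDerivWithin n A (Set.Ioi 0) x
          + (-1:ℝ)^n * iteratedDerivWithin n B (Set.Ioi 0) x := by
      rw [pow_succ]; ring
    rw [e]; linarith

lemma cm_mul {u v : ℝ → ℝ} (hu : CompletelyMonotonicOn u (Set.Ioi 0))
    (hv : CompletelyMonotonicOn v (Set.Ioi 0)) :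
    CompletelyMonotonicOn (fun y => u y * v y) (Set.Ioi 0) :=
  ⟨hu.1.mul hv.1, fun n x hx => cm_mul_aux n u v hu hv x hx⟩

lemma cm_exp_aux : ∀ n : ℕ, ∀ u v : ℝ → ℝ, CompletelyMonotonicOn u (Set.Ioi 0) →
    CompletelyMonotonicOn v (Set.Ioi 0) → ∀ x ∈ Set.Ioi (0:ℝ),
    0 ≤ (-1:ℝ)^n * iteratedDerivWithin n (fun y => u y * Real.exp (v y)) (Set.Ioi 0) x := by
  intro n
  induction n with
  | zero =>
    intro u v hu hv x hx
    have h1 := hu.2 0 x hx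
    simp only [iteratedDerivWithin_zero, pow_zero, one_mul] at h1 ⊢
    exact mul_nonneg h1 (Real.exp_pos _).le
  | succ n IH =>
    intro u v hu hv x hx
    have hu' := cm_negderiv hu
    have hv' := cm_negderiv hv
    set A : ℝ → ℝ := fun y => (-(derivWithin u (Set.Ioi 0) y)) * Real.exp (v y) with hAdef
    set B : ℝ → ℝ := fun y => (u y * -(derivWithin v (Set.Ioi 0) y)) * Real.exp (v y) with hBdef
    have heq : Set.EqOn (derivWithin (fun y => u y * Real.exp (v y)) (Set.Ioi 0))
        (-(A + B)) (Set.Ioi 0) := by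
      intro y hy
      have hud : DifferentiableWithinAt ℝ u (Set.Ioi 0) y :=
        (hu.1.differentiableOn (by simp)) y hy
      have hvd : DifferentiableWithinAt ℝ v (Set.Ioi 0) y :=
        (hv.1.differentiableOn (by simp)) y hy
      have hvexp : HasDerivWithinAt (fun z => Real.exp (v z))
          (Real.exp (v y) * derivWithin v (Set.Ioi 0) y) (Set.Ioi 0) y :=
        hvd.hasDerivWithinAt.exp
      have := (hud.hasDerivWithinAt.mul hvexp).derivWithin (hsU y hy)
      rw [show (fun y => u y * Real.exp (v y)) = u * fun z => Real.exp (v z) from rfl, this]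
      simp only [hAdef, hBdef, Pi.neg_apply, Pi.add_apply]
      ring
    rw [iteratedDerivWithin_succ', iteratedDerivWithin_congr heq hx]
    have hA : ContDiffOn ℝ (n : ℕ∞) A (Set.Ioi 0) :=
      (((hu.1.derivWithin hsU (by simp)).neg).mul hv.1.exp).of_le (by exact_mod_cast le_top)
    have hB : ContDiffOn ℝ (n : ℕ∞) B (Set.Ioi 0) :=
      ((hu.1.mul ((hv.1.derivWithin hsU (by simp)).neg)).mul hv.1.exp).of_le (by exact_mod_cast le_top)
    rw [iteratedDerivWithin_neg (A + B), iteratedDerivWithin_add hx hsU (hA x hx) (hB x hx)]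
    have h1 : 0 ≤ (-1:ℝ)^n * iteratedDerivWithin n A (Set.Ioi 0) x := IH _ _ hu' hv x hx
    have h2 : 0 ≤ (-1:ℝ)^n * iteratedDerivWithin n B (Set.Ioi 0) x :=
      IH _ _ (cm_mul hu hv') hv x hx
    have e : (-1:ℝ)^(n+1) * -(iteratedDerivWithin n A (Set.Ioi 0) x
          + iteratedDerivWithin n B (Set.Ioi 0) x)
        = (-1:ℝ)^n * iteratedDerivWithin n A (Set.Ioi 0) x
          + (-1:ℝ)^n * iteratedDerivWithin n B (Set.Ioi 0) x := by
      rw [pow_succ]; ring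
    rw [e]; linarith

lemma cm_one : CompletelyMonotonicOn (fun _ => (1:ℝ)) (Set.Ioi 0) := by
  refine ⟨contDiffOn_const, fun n x hx => ?_⟩
  cases n with
  | zero => simp
  | succ m =>
    have h0 : iteratedDerivWithin (m+1) (fun _ => (1:ℝ)) (Set.Ioi 0) x = 0 := by
      have := iteratedFDerivWithin_const_of_ne (𝕜 := ℝ) (n := m+1)
        (by simp) (1:ℝ) (Set.Ioi (0:ℝ))
      simp [iteratedDerivWithin, this]
    rw [h0]; simp

/-- `L n x = log(1+x) - ∑_{k=1}^n x^k/(k (1+x)^k)`. -/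
def L (n : ℕ) (x : ℝ) : ℝ :=
  Real.log (1+x) - ∑ k ∈ Finset.Icc 1 n, x^k / (k * (1+x)^k)

def Sf (n : ℕ) (x : ℝ) : ℝ := L n x / x^(n+1)

lemma L_succ (n : ℕ) (x : ℝ) :
    L (n+1) x = L n x - x^(n+1) / ((n+1 : ℝ) * (1+x)^(n+1)) := by
  rw [L, L, Finset.sum_Icc_succ_top (by omega : 1 ≤ n+1)]
  push_cast
  ring

lemma hL : ∀ n : ℕ, ∀ x ∈ Set.Ioi (-1:ℝ), HasDerivAt (L n) (x^n / (1+x)^(n+1)) x := by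
  intro n
  induction n with
  | zero =>
    intro x hx
    have h1x : (0:ℝ) < 1 + x := by have : (-1:ℝ) < x := hx; linarith
    have h0 : L 0 = fun y => Real.log (1+y) := by
      funext y; simp [L]
    rw [h0]
    have h1 : HasDerivAt (fun y : ℝ => 1 + y) 1 x := (hasDerivAt_id x).const_add 1
    have := h1.log h1x.ne'
    simpa using this
  | succ n IH =>
    intro x hx
    have h1x : (0:ℝ) < 1 + x := by have : (-1:ℝ) < x := hx; linarith
    have hN : HasDerivAt (fun y : ℝ => y^(n+1)) (((n:ℝ)+1)*x^n) x := by
      simpa using hasDerivAt_pow (n+1) x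
    have hD : HasDerivAt (fun y : ℝ => ((n:ℝ)+1) * (1+y)^(n+1))
        (((n:ℝ)+1) * (((n:ℝ)+1)*(1+x)^n)) x := by
      have h1 : HasDerivAt (fun y : ℝ => (1+y)^(n+1)) (((n:ℝ)+1)*(1+x)^n) x := by
        have := ((hasDerivAt_id x).const_add 1).pow (n+1)
        simpa [Pi.pow_def] using this
      simpa using h1.const_mul ((n:ℝ)+1)
    have hDne : ((n:ℝ)+1) * (1+x)^(n+1) ≠ 0 := by positivity
    have ht := hN.div hD hDne
    have hLn := IH x hx
    have hsub := hLn.sub ht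
    have hfun : L (n+1) = fun y => L n y - y^(n+1)/(((n:ℝ)+1)*(1+y)^(n+1)) := by
      funext y; rw [L_succ]
    rw [hfun]
    refine hsub.congr_deriv ?_
    have hx0 : (1+x) ≠ 0 := h1x.ne'
    field_simp
    ring

lemma L_nonneg (n : ℕ) {x : ℝ} (hx : 0 ≤ x) : 0 ≤ L n x := by
  have h0 : L n 0 = 0 := by
    rw [L]
    have : ∑ k ∈ Finset.Icc 1 n, (0:ℝ)^k / (k * (1+(0:ℝ))^k) = 0 := by
      apply Finset.sum_eq_zero
      intro k hk
      have hk1 : 1 ≤ k := (Finset.mem_Icc.mp hk).1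
      rw [zero_pow (by omega)]
      simp
    rw [this]
    simp
  have hmem : ∀ y ∈ Set.Ici (0:ℝ), y ∈ Set.Ioi (-1:ℝ) := by
    intro y hy; have : (0:ℝ) ≤ y := hy; exact Set.mem_Ioi.mpr (by linarith)
  have hmono : MonotoneOn (L n) (Set.Ici 0) := by
    apply monotoneOn_of_deriv_nonneg (convex_Ici 0)
    · intro y hy
      exact ((hL n y (hmem y hy)).continuousAt).continuousWithinAt
    · intro y hy
      rw [interior_Ici] at hy
      exact ((hL n y (hmem y (Set.mem_Ici.mpr (le_of_lt hy)))).differentiableAt).differentiableWithinAt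
    · intro y hy
      rw [interior_Ici] at hy
      have hy0 : (0:ℝ) < y := hy
      rw [(hL n y (hmem y (Set.mem_Ici.mpr hy0.le))).deriv]
      have : (0:ℝ) < 1 + y := by linarith
      positivity
  have := hmono (Set.self_mem_Ici) (Set.mem_Ici.mpr hx) hx
  rwa [h0] at this

lemma Sf_nonneg (n : ℕ) {x : ℝ} (hx : 0 < x) : 0 ≤ Sf n x :=
  div_nonneg (L_nonneg n hx.le) (by positivity)

lemma hS : ∀ n : ℕ, ∀ x ∈ Set.Ioi (0:ℝ),
    HasDerivAt (Sf n) (-((n:ℝ)+1) * Sf (n+1) x) x := by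
  intro n x hx
  have hx0 : (0:ℝ) < x := hx
  have h1x : (0:ℝ) < 1 + x := by linarith
  have hLx := hL n x (Set.mem_Ioi.mpr (by linarith))
  have hP : HasDerivAt (fun y : ℝ => y^(n+1)) (((n:ℝ)+1)*x^n) x := by
    simpa using hasDerivAt_pow (n+1) x
  have hdiv := hLx.div hP (by positivity : x^(n+1) ≠ 0)
  have hfun : Sf n = fun y => L n y / y^(n+1) := rfl
  rw [hfun]
  refine hdiv.congr_deriv ?_
  rw [Sf, L_succ]
  have hxne : x ≠ 0 := hx0.ne'
  have h1xne : (1+x) ≠ 0 := h1x.ne'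
  field_simp
  ring

def g : ℝ → ℝ := fun x => Real.log (1+x) / x

lemma g_smooth : ContDiffOn ℝ (⊤ : ℕ∞) g (Set.Ioi 0) := by
  apply ContDiffOn.div
  · apply ContDiffOn.log
    · exact contDiffOn_const.add contDiffOn_id
    · intro y hy
      have : (0:ℝ) < y := hy
      positivity
  · exact contDiffOn_id
  · intro y hy
    exact ne_of_gt hy

lemma g_iter : ∀ n : ℕ, ∀ x ∈ Set.Ioi (0:ℝ),
    iteratedDerivWithin n g (Set.Ioi 0) x = (-1:ℝ)^n * n.factorial * Sf n x := by
  intro n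
  induction n with
  | zero =>
    intro x hx
    simp [g, Sf, L]
  | succ n IH =>
    intro x hx
    rw [iteratedDerivWithin_succ, derivWithin_of_isOpen isOpen_Ioi hx]
    have hev : iteratedDerivWithin n g (Set.Ioi 0)
        =ᶠ[𝓝 x] fun y => (-1:ℝ)^n * n.factorial * Sf n y := by
      filter_upwards [isOpen_Ioi.mem_nhds hx] with y hy using IH y hy
    rw [hev.deriv_eq]
    have hd := ((hS n x hx).const_mul ((-1:ℝ)^n * n.factorial)).deriv
    rw [hd, Nat.factorial_succ]
    push_cast
    ring

lemma cm_g : CompletelyMonotonicOn g (Set.Ioi 0) := by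
  refine ⟨g_smooth, fun n x hx => ?_⟩
  rw [g_iter n x hx]
  have hx0 : (0:ℝ) < x := hx
  have hSf := Sf_nonneg n hx0
  have e : (-1:ℝ)^n * ((-1:ℝ)^n * (n.factorial:ℝ) * Sf n x)
      = ((-1:ℝ)^n)^2 * ((n.factorial:ℝ) * Sf n x) := by ring
  have e2 : ((-1:ℝ)^n)^2 = 1 := by
    rw [← pow_mul, mul_comm, pow_mul, neg_one_sq, one_pow]
  rw [e, e2, one_mul]
  positivity

end

end Stmt15Aux

open Stmt15Aux in
theorem stmt_15 :
    CompletelyMonotonicOn (fun x : ℝ => (1 + x) ^ (1 / x)) (Set.Ioi 0) := by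
  have heq : Set.EqOn (fun x : ℝ => (1 + x) ^ (1 / x))
      (fun x => (1:ℝ) * Real.exp (g x)) (Set.Ioi 0) := by
    intro x hx
    have hx0 : (0:ℝ) < x := hx
    have h1x : (0:ℝ) < 1 + x := by linarith
    show (1 + x) ^ (1 / x) = 1 * Real.exp (g x)
    rw [one_mul, Real.rpow_def_of_pos h1x, g]
    congr 1
    field_simp
  constructor
  · exact ((contDiffOn_const.mul g_smooth.exp)).congr heq
  · intro n x hx
    rw [iteratedDerivWithin_congr heq hx]
    exact cm_exp_aux n (fun _ => (1:ℝ)) g cm_one cm_g x hx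
end

section
/- If f is a Bernstein function on (0,∞) with f(x) > 0 for all x > 0, then the function x ↦ f(x)/x is completely monotonic on (0,∞). -/
open Set Real
open Filter Nat Topology

theorem stmt_16 (f : ℝ → ℝ) (hf : BernsteinOn f (Set.Ioi 0))
    (hfpos : ∀ x ∈ Set.Ioi (0:ℝ), 0 < f x) :
    CompletelyMonotonicOn (fun x => f x / x) (Set.Ioi 0) := by
  obtain ⟨hsm, hnn, hsign⟩ := hf
  have hso : IsOpen (Set.Ioi (0:ℝ)) := isOpen_Ioi
  have hsu : UniqueDiffOn ℝ (Set.Ioi (0:ℝ)) := uniqueDiffOn_Ioi 0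
  set F : ℕ → ℝ → ℝ := fun n => iteratedDerivWithin n f (Set.Ioi 0) with hFdef
  -- derivative of iterated derivatives
  have hFd : ∀ n, ∀ x ∈ Set.Ioi (0:ℝ), HasDerivAt (F n) (F (n+1) x) x := by
    intro n x hx
    have h1 : DifferentiableAt ℝ (F n) x :=
      ((hsm.differentiableOn_iteratedDerivWithin (by exact_mod_cast ENat.coe_lt_top n) hsu) x hx).differentiableAt
        (hso.mem_nhds hx)
    have h2 : F (n+1) x = deriv (F n) x := by
      rw [hFdef]
      simp only
      rw [iteratedDerivWithin_succ]
      exact derivWithin_of_isOpen hso hx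
    rw [h2]; exact h1.hasDerivAt
  -- derivative of the Taylor-type sum
  have hTd : ∀ (a : ℝ) (n : ℕ), ∀ x ∈ Set.Ioi (0:ℝ),
      HasDerivAt (fun y => ∑ k ∈ Finset.range (n+1), F k y * (a - y)^k / k !)
        (F (n+1) x * (a - x)^n / n !) x := by
    intro a n
    induction n with
    | zero =>
      intro x hx
      have he : (fun y => ∑ k ∈ Finset.range 1, F k y * (a - y)^k / k !) = fun y => F 0 y := by
        funext y; simp
      rw [he]
      simpa using hFd 0 x hx
    | succ n ih =>
      intro x hx
      have h1 := ih x hx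
      have h2 := hFd (n+1) x hx
      have hsub : HasDerivAt (fun y : ℝ => a - y) (-1) x := (hasDerivAt_id x).const_sub a
      have h3 : HasDerivAt (fun y => (a - y)^(n+1)) ((n+1) * (a - x)^n * (-1)) x := by
        simpa using hsub.fun_pow (n+1)
      have h4 : HasDerivAt (fun y => F (n+1) y * (a - y)^(n+1) / (n+1)!)
          ((F (n+2) x * (a - x)^(n+1) + F (n+1) x * ((n+1) * (a - x)^n * (-1))) / (n+1)!) x :=
        (h2.mul h3).div_const _
      have he : (fun y => ∑ k ∈ Finset.range (n+2), F k y * (a - y)^k / k !)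
          = fun y => (∑ k ∈ Finset.range (n+1), F k y * (a - y)^k / k !)
              + F (n+1) y * (a - y)^(n+1) / (n+1)! := by
        funext y; rw [Finset.sum_range_succ]
      rw [he]
      have := h1.fun_add h4
      refine this.congr_deriv ?_
      have hn : ((n:ℝ)+1) ≠ 0 := by positivity
      have hfac : ((n !:ℝ)) ≠ 0 := by exact_mod_cast Nat.factorial_ne_zero n
      push_cast [Nat.factorial_succ]
      field_simp
      ring
  -- Taylor bound: the sum dominates f a
  have hTge : ∀ (n : ℕ) (a x : ℝ), 0 < a → a ≤ x →
      f a ≤ ∑ k ∈ Finset.range (n+1), F k x * (a - x)^k / k ! := by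
    intro n a x ha hax
    set g : ℝ → ℝ := fun y => ∑ k ∈ Finset.range (n+1), F k y * (a - y)^k / k ! with hg
    have hgd : ∀ y ∈ Set.Icc a x, HasDerivAt g (F (n+1) y * (a - y)^n / n !) y :=
      fun y hy => hTd a n y (lt_of_lt_of_le ha hy.1)
    have hmono : MonotoneOn g (Set.Icc a x) := by
      apply monotoneOn_of_deriv_nonneg (convex_Icc a x)
      · exact fun y hy => (hgd y hy).continuousAt.continuousWithinAt
      · intro y hy
        rw [interior_Icc] at hy
        exact (hgd y (Ioo_subset_Icc_self hy)).differentiableAt.differentiableWithinAt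
      · intro y hy
        rw [interior_Icc] at hy
        rw [(hgd y (Ioo_subset_Icc_self hy)).deriv]
        have hy0 : (0:ℝ) < y := lt_trans ha hy.1
        have hsgn : 0 ≤ (-1:ℝ)^n * F (n+1) y := by
          have := hsign (n+1) (by omega) y hy0
          simpa using this
        have hya : 0 ≤ (y - a)^n := pow_nonneg (by linarith [hy.1]) n
        have h5 : F (n+1) y * (a - y)^n = ((-1:ℝ)^n * F (n+1) y) * (y - a)^n := by
          have : (a - y) = -(y - a) := by ring
          rw [this, neg_pow]; ring
        rw [h5]
        exact div_nonneg (mul_nonneg hsgn hya) (by positivity)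
    have hga : g a = f a := by
      rw [hg]
      simp only
      rw [Finset.sum_eq_single 0]
      · simp [hFdef, iteratedDerivWithin_zero]
      · intro k _ hk
        have : (a - a) = 0 := by ring
        rw [this, zero_pow hk]; ring
      · intro h; simp at h
    calc f a = g a := hga.symm
      _ ≤ g x := hmono ⟨le_refl a, hax⟩ ⟨hax, le_refl x⟩ hax
  -- nonnegativity of the sum at a = 0
  have hT0 : ∀ (n : ℕ), ∀ x ∈ Set.Ioi (0:ℝ),
      0 ≤ ∑ k ∈ Finset.range (n+1), F k x * (-x)^k / k ! := by
    intro n x hx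
    have hxp : (0:ℝ) < x := hx
    set S : ℝ → ℝ := fun a => ∑ k ∈ Finset.range (n+1), F k x * (a - x)^k / k ! with hS
    have hScont : Continuous S := by
      apply continuous_finset_sum
      intro k _
      fun_prop
    have htend : Tendsto S (𝓝[>] (0:ℝ)) (𝓝 (S 0)) :=
      (hScont.tendsto 0).mono_left nhdsWithin_le_nhds
    have hev : ∀ᶠ a in 𝓝[>] (0:ℝ), 0 ≤ S a := by
      have hlt : ∀ᶠ a in 𝓝[>] (0:ℝ), a < x :=
        eventually_nhdsWithin_of_eventually_nhds (eventually_lt_nhds hxp)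
      filter_upwards [hlt, self_mem_nhdsWithin] with a halt ha
      exact le_trans (hfpos a ha).le (hTge n a x ha halt.le)
    have := ge_of_tendsto htend hev
    have hS0 : S 0 = ∑ k ∈ Finset.range (n+1), F k x * (-x)^k / k ! := by
      rw [hS]; simp only [zero_sub]
    rw [hS0] at this
    exact this
  -- formula for iterated derivatives of f x / x
  have hG : ∀ (n : ℕ), ∀ x ∈ Set.Ioi (0:ℝ),
      iteratedDerivWithin n (fun y => f y / y) (Set.Ioi 0) x
        = (-1:ℝ)^n * n ! * (∑ k ∈ Finset.range (n+1), F k x * (-x)^k / k !) / x^(n+1) := by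
    intro n
    induction n with
    | zero =>
      intro x hx
      have hx0 : x ≠ 0 := ne_of_gt hx
      rw [iteratedDerivWithin_zero]
      simp [hFdef, iteratedDerivWithin_zero, hx0]
    | succ n ih =>
      intro x hx
      have hx0 : x ≠ 0 := ne_of_gt hx
      -- the explicit function and its derivative
      have hTd0 : HasDerivAt (fun y => ∑ k ∈ Finset.range (n+1), F k y * (-y)^k / k !)
          (F (n+1) x * (-x)^n / n !) x := by
        have h := hTd 0 n x hx
        simp only [zero_sub] at h
        exact h
      have hden : HasDerivAt (fun y : ℝ => y^(n+1)) ((n+1) * x^n) x := by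
        simpa using hasDerivAt_pow (n+1) x
      have hq : HasDerivAt
          (fun y => (-1:ℝ)^n * n ! * (∑ k ∈ Finset.range (n+1), F k y * (-y)^k / k !) / y^(n+1))
          (((-1:ℝ)^n * n ! * (F (n+1) x * (-x)^n / n !) * x^(n+1)
            - (-1:ℝ)^n * n ! * (∑ k ∈ Finset.range (n+1), F k x * (-x)^k / k !) * ((n+1) * x^n))
            / (x^(n+1))^2) x :=
        ((hTd0.const_mul ((-1:ℝ)^n * n !)).div hden (pow_ne_zero _ hx0))
      -- the derivative value equals the target formula
      have hval : (((-1:ℝ)^n * n ! * (F (n+1) x * (-x)^n / n !) * x^(n+1)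
            - (-1:ℝ)^n * n ! * (∑ k ∈ Finset.range (n+1), F k x * (-x)^k / k !) * ((n+1) * x^n))
            / (x^(n+1))^2)
          = (-1:ℝ)^(n+1) * (n+1)! * (∑ k ∈ Finset.range (n+2), F k x * (-x)^k / k !) / x^(n+2) := by
        rw [Finset.sum_range_succ _ (n+1)]
        have hfac : ((n !:ℝ)) ≠ 0 := by exact_mod_cast Nat.factorial_ne_zero n
        push_cast [Nat.factorial_succ]
        rw [neg_pow x, neg_pow x]
        rcases neg_one_pow_eq_or ℝ n with h | h <;>
          simp only [pow_succ, h] <;> field_simp <;> ring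
      -- conclude
      have heq : Set.EqOn (iteratedDerivWithin n (fun y => f y / y) (Set.Ioi 0))
          (fun y => (-1:ℝ)^n * n ! * (∑ k ∈ Finset.range (n+1), F k y * (-y)^k / k !) / y^(n+1))
          (Set.Ioi 0) := fun y hy => ih y hy
      have hev : iteratedDerivWithin n (fun y => f y / y) (Set.Ioi 0)
          =ᶠ[𝓝 x] (fun y => (-1:ℝ)^n * n ! * (∑ k ∈ Finset.range (n+1), F k y * (-y)^k / k !) / y^(n+1)) :=
        Filter.eventuallyEq_of_mem (hso.mem_nhds hx) heq
      have hq' : HasDerivAt (iteratedDerivWithin n (fun y => f y / y) (Set.Ioi 0))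
          ((-1:ℝ)^(n+1) * (n+1)! * (∑ k ∈ Finset.range (n+2), F k x * (-x)^k / k !) / x^(n+2)) x := by
        rw [← hval]
        exact hq.congr_of_eventuallyEq hev
      rw [iteratedDerivWithin_succ, derivWithin_of_isOpen hso hx,
        hq'.deriv]
  -- assemble
  constructor
  · exact hsm.div contDiffOn_id (fun x hx => ne_of_gt hx)
  · intro n x hx
    rw [hG n x hx]
    have hT := hT0 n x hx
    have hxp : (0:ℝ) < x := hx
    have he : ((-1:ℝ))^n * ((-1:ℝ)^n * n ! * (∑ k ∈ Finset.range (n+1), F k x * (-x)^k / k !) / x^(n+1))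
        = n ! * (∑ k ∈ Finset.range (n+1), F k x * (-x)^k / k !) / x^(n+1) := by
      have h1 : ((-1:ℝ))^n * (-1)^n = 1 := by
        rw [← pow_add]; exact Even.neg_one_pow ⟨n, rfl⟩
      linear_combination ((n ! : ℝ) * (∑ k ∈ Finset.range (n+1), F k x * (-x)^k / k !) / x^(n+1)) * h1
    rw [he]
    positivity
end

section
/- If f is a Bernstein function on (0,∞) with f(x) > 0 for all x > 0, then 1/f is completely monotonic on (0,∞). -/
open Set Real

open Finset in
/-- Leibniz rule for `iteratedDerivWithin` on `Ioi 0`. -/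
lemma leibnizWithinIoi {f g : ℝ → ℝ} (hf : ContDiffOn ℝ (⊤ : ℕ∞) f (Ioi 0))
    (hg : ContDiffOn ℝ (⊤ : ℕ∞) g (Ioi 0)) (n : ℕ) :
    ∀ x ∈ Ioi (0:ℝ),
      iteratedDerivWithin n (fun y => f y * g y) (Ioi 0) x =
        ∑ k ∈ Finset.range (n+1), (n.choose k : ℝ) *
          (iteratedDerivWithin k f (Ioi 0) x * iteratedDerivWithin (n-k) g (Ioi 0) x) := by
  have hu : UniqueDiffOn ℝ (Ioi (0:ℝ)) := uniqueDiffOn_Ioi 0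
  have hdf : ∀ (m : ℕ), ∀ y ∈ Ioi (0:ℝ),
      DifferentiableWithinAt ℝ (iteratedDerivWithin m f (Ioi 0)) (Ioi 0) y :=
    fun m y hy => (hf.differentiableOn_iteratedDerivWithin (by exact_mod_cast ENat.coe_lt_top m) hu) y hy
  have hdg : ∀ (m : ℕ), ∀ y ∈ Ioi (0:ℝ),
      DifferentiableWithinAt ℝ (iteratedDerivWithin m g (Ioi 0)) (Ioi 0) y :=
    fun m y hy => (hg.differentiableOn_iteratedDerivWithin (by exact_mod_cast ENat.coe_lt_top m) hu) y hy
  induction n with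
  | zero => intro x hx; simp
  | succ n ih =>
    intro x hx
    have hux : UniqueDiffWithinAt ℝ (Ioi (0:ℝ)) x := hu x hx
    rw [iteratedDerivWithin_succ]
    have hEq : Set.EqOn (iteratedDerivWithin n (fun y => f y * g y) (Ioi 0))
        (fun y => ∑ k ∈ range (n+1), (n.choose k : ℝ) *
          (iteratedDerivWithin k f (Ioi 0) y * iteratedDerivWithin (n-k) g (Ioi 0) y))
        (Ioi 0) := fun y hy => ih y hy
    rw [derivWithin_congr hEq (hEq hx)]
    rw [derivWithin_fun_sum (fun i _ => ((hdf i x hx).fun_mul (hdg (n-i) x hx)).const_mul _)]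
    have hterm : ∀ k ∈ range (n+1),
        derivWithin (fun y => (n.choose k : ℝ) *
          (iteratedDerivWithin k f (Ioi 0) y * iteratedDerivWithin (n-k) g (Ioi 0) y)) (Ioi 0) x
        = (n.choose k : ℝ) *
            (iteratedDerivWithin (k+1) f (Ioi 0) x * iteratedDerivWithin (n-k) g (Ioi 0) x
            + iteratedDerivWithin k f (Ioi 0) x * iteratedDerivWithin (n+1-k) g (Ioi 0) x) := by
      intro k hk
      have hk' : k ≤ n := Nat.lt_succ_iff.mp (mem_range.mp hk)
      rw [derivWithin_const_mul _ ((hdf k x hx).fun_mul (hdg (n-k) x hx)),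
        derivWithin_fun_mul (hdf k x hx) (hdg (n-k) x hx),
        ← iteratedDerivWithin_succ, ← iteratedDerivWithin_succ,
        Nat.sub_add_comm hk']
    rw [Finset.sum_congr rfl hterm]
    have := Finset.sum_choose_succ_mul
      (fun i j => iteratedDerivWithin i f (Ioi 0) x * iteratedDerivWithin j g (Ioi 0) x) n
    simp only [mul_add, Finset.sum_add_distrib]
    rw [show n + 1 + 1 = n + 2 from rfl, this]
    ring

open Finset in
theorem stmt_17 (f : ℝ → ℝ) (hf : BernsteinOn f (Set.Ioi 0))
    (hfpos : ∀ x ∈ Set.Ioi (0:ℝ), 0 < f x) :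
    CompletelyMonotonicOn (fun x => 1 / f x) (Set.Ioi 0) := by
  obtain ⟨hsm, _hnn, hbern⟩ := hf
  have hu : UniqueDiffOn ℝ (Ioi (0:ℝ)) := uniqueDiffOn_Ioi 0
  set g : ℝ → ℝ := fun x => 1 / f x with hg_def
  have hne : ∀ x ∈ Ioi (0:ℝ), f x ≠ 0 := fun x hx => (hfpos x hx).ne'
  have hgsm : ContDiffOn ℝ (⊤ : ℕ∞) g (Ioi 0) := by
    simp only [hg_def, one_div]
    exact fun x hx => (hsm x hx).inv (hne x hx)
  refine ⟨hgsm, ?_⟩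
  intro n
  induction n using Nat.strong_induction_on with
  | _ n ih =>
    match n with
    | 0 =>
      intro x hx
      simp only [pow_zero, one_mul, iteratedDerivWithin_zero, hg_def]
      exact (one_div_pos.mpr (hfpos x hx)).le
    | (m+1) =>
      intro x hx
      set n := m + 1 with hn
      -- g * f = 1 on Ioi 0
      have hgf : Set.EqOn (fun y => g y * f y) (fun _ => (1:ℝ)) (Ioi 0) := by
        intro y hy
        simp only [hg_def, one_div]
        exact inv_mul_cancel₀ (hne y hy)
      -- iterated derivative of constant 1 of order n ≥ 1 is 0
      have hconst : iteratedDerivWithin n (fun _ => (1:ℝ)) (Ioi 0) x = 0 := by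
        rw [iteratedDerivWithin_eq_iteratedFDerivWithin,
          iteratedFDerivWithin_const_of_ne (by omega : n ≠ 0) _ (Ioi 0)]
        simp
      have hzero : iteratedDerivWithin n (fun y => g y * f y) (Ioi 0) x = 0 := by
        rw [iteratedDerivWithin_congr hgf hx, hconst]
      rw [leibnizWithinIoi hgsm hsm n x hx] at hzero
      -- split off the k = n term
      rw [Finset.sum_range_succ] at hzero
      simp only [Nat.choose_self, Nat.cast_one, Nat.sub_self, iteratedDerivWithin_zero,
        one_mul] at hzero
      have hsum : iteratedDerivWithin n g (Ioi 0) x * f x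
          = - ∑ k ∈ range n, (n.choose k : ℝ) *
              (iteratedDerivWithin k g (Ioi 0) x * iteratedDerivWithin (n-k) f (Ioi 0) x) := by
        linarith [hzero]
      have hterm_nonneg : ∀ k ∈ range n, 0 ≤ (n.choose k : ℝ) *
          (((-1:ℝ)^k * iteratedDerivWithin k g (Ioi 0) x) *
            ((-1:ℝ)^(n-k-1) * iteratedDerivWithin (n-k) f (Ioi 0) x)) := by
        intro k hk
        have hkn : k < n := mem_range.mp hk
        have h1 : 0 ≤ (-1:ℝ)^k * iteratedDerivWithin k g (Ioi 0) x := ih k hkn x hx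
        have h2 : 0 ≤ (-1:ℝ)^(n-k-1) * iteratedDerivWithin (n-k) f (Ioi 0) x :=
          hbern (n-k) (by omega) x hx
        positivity
      have hpos : (0:ℝ) ≤ ∑ k ∈ range n, (n.choose k : ℝ) *
          (((-1:ℝ)^k * iteratedDerivWithin k g (Ioi 0) x) *
            ((-1:ℝ)^(n-k-1) * iteratedDerivWithin (n-k) f (Ioi 0) x)) :=
        Finset.sum_nonneg hterm_nonneg
      have hrw : ∑ k ∈ range n, (n.choose k : ℝ) *
          (((-1:ℝ)^k * iteratedDerivWithin k g (Ioi 0) x) *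
            ((-1:ℝ)^(n-k-1) * iteratedDerivWithin (n-k) f (Ioi 0) x))
          = (-1:ℝ)^(n-1) * ∑ k ∈ range n, (n.choose k : ℝ) *
              (iteratedDerivWithin k g (Ioi 0) x * iteratedDerivWithin (n-k) f (Ioi 0) x) := by
        rw [Finset.mul_sum]
        refine Finset.sum_congr rfl fun k hk => ?_
        have hkn : k < n := mem_range.mp hk
        have hexp : (-1:ℝ)^k * (-1:ℝ)^(n-k-1) = (-1:ℝ)^(n-1) := by
          rw [← pow_add]
          congr 1
          omega
        calc (n.choose k : ℝ) *
            (((-1:ℝ)^k * iteratedDerivWithin k g (Ioi 0) x) *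
              ((-1:ℝ)^(n-k-1) * iteratedDerivWithin (n-k) f (Ioi 0) x))
            = ((-1:ℝ)^k * (-1:ℝ)^(n-k-1)) * ((n.choose k : ℝ) *
              (iteratedDerivWithin k g (Ioi 0) x * iteratedDerivWithin (n-k) f (Ioi 0) x)) := by
              ring
          _ = (-1:ℝ)^(n-1) * ((n.choose k : ℝ) *
              (iteratedDerivWithin k g (Ioi 0) x * iteratedDerivWithin (n-k) f (Ioi 0) x)) := by
              rw [hexp]
      rw [hrw] at hpos
      -- so 0 ≤ (-1)^(n-1) * (- itd n g x * f x) = (-1)^n * itd n g x * f x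
      have hfinal : (0:ℝ) ≤ (-1:ℝ)^n * iteratedDerivWithin n g (Ioi 0) x * f x := by
        have hsign : (-1:ℝ)^n = -(-1:ℝ)^(n-1) := by
          rw [hn]; simp [pow_succ]
        calc (0:ℝ) ≤ (-1:ℝ)^(n-1) * ∑ k ∈ range n, (n.choose k : ℝ) *
              (iteratedDerivWithin k g (Ioi 0) x * iteratedDerivWithin (n-k) f (Ioi 0) x) := hpos
          _ = (-1:ℝ)^(n-1) * (- (iteratedDerivWithin n g (Ioi 0) x * f x)) := by
              rw [hsum]; ring
          _ = (-1:ℝ)^n * iteratedDerivWithin n g (Ioi 0) x * f x := by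
              rw [hsign]; ring
      have hfx : (0:ℝ) < f x := hfpos x hx
      nlinarith [hfinal, hfx]
end
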